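/- If nested programs P and Q are not strongly equivalent, then there exists a program R, each of whose rules has a literal as head and either a literal or ⊤ as body, such that P ∪ R and Q ∪ R have different answer sets. -/

import Mathlib

open scoped Classical

inductive Lit where
  | pos : ℕ → Lit
  | neg : ℕ → Lit
deriving DecidableEq

inductive Fml where
  | bot : Fml
  | top : Fml
  | lit : Lit → Fml
  | not : Fml → Fml
  | conj : Fml → Fml → Fml
  | disj : Fml → Fml → Fml
deriving DecidableEq

structure Rule where
  head : Fml
  body : Fml
deriving DecidableEq

abbrev Prog := Set Rule

/-- A set of literals is consistent if it contains no complementary pair. -/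
def Consistent (X : Set Lit) : Prop :=
  ∀ a : ℕ, ¬ (Lit.pos a ∈ X ∧ Lit.neg a ∈ X)

def Sat (X : Set Lit) : Fml → Prop
  | Fml.bot => False
  | Fml.top => True
  | Fml.lit l => l ∈ X
  | Fml.not F => ¬ Sat X F
  | Fml.conj F G => Sat X F ∧ Sat X G
  | Fml.disj F G => Sat X F ∨ Sat X G

def SatRule (X : Set Lit) (r : Rule) : Prop := Sat X r.body → Sat X r.head

def SatProg (X : Set Lit) (P : Prog) : Prop := ∀ r ∈ P, SatRule X r

/-- The reduct of a formula relative to X. -/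
noncomputable def Reduct (X : Set Lit) : Fml → Fml
  | Fml.bot => Fml.bot
  | Fml.top => Fml.top
  | Fml.lit l => Fml.lit l
  | Fml.not F => if Sat X F then Fml.bot else Fml.top
  | Fml.conj F G => Fml.conj (Reduct X F) (Reduct X G)
  | Fml.disj F G => Fml.disj (Reduct X F) (Reduct X G)

noncomputable def ReductRule (X : Set Lit) (r : Rule) : Rule :=
  ⟨Reduct X r.head, Reduct X r.body⟩

noncomputable def ReductProg (X : Set Lit) (P : Prog) : Prog :=
  ReductRule X '' P

/-- Y is an answer set for P: Y is minimal among consistent sets satisfying the reduct of P w.r.t. Y. -/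
def AnswerSet (Y : Set Lit) (P : Prog) : Prop :=
  Consistent Y ∧ SatProg Y (ReductProg Y P) ∧
    ∀ Z : Set Lit, Consistent Z → SatProg Z (ReductProg Y P) → Z ⊆ Y → Z = Y

def SEModel (P : Prog) (X Y : Set Lit) : Prop :=
  Consistent X ∧ Consistent Y ∧ X ⊆ Y ∧ SatProg Y P ∧ SatProg X (ReductProg Y P)

def StrongEq (P Q : Prog) : Prop :=
  ∀ R : Prog, ∀ Y : Set Lit, AnswerSet Y (P ∪ R) ↔ AnswerSet Y (Q ∪ R)

def Fml.negFree : Fml → Prop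
  | Fml.bot => True
  | Fml.top => True
  | Fml.lit l => ∃ a, l = Lit.pos a
  | Fml.not F => F.negFree
  | Fml.conj F G => F.negFree ∧ G.negFree
  | Fml.disj F G => F.negFree ∧ G.negFree

def ProgNegFree (P : Prog) : Prop := ∀ r ∈ P, r.head.negFree ∧ r.body.negFree

/-- The set of atoms (positive literals) in a set of literals. -/
def PosLits (Z : Set Lit) : Set Lit := {l ∈ Z | ∃ a, l = Lit.pos a}

def AtomsOnly (Z : Set Lit) : Prop := ∀ l ∈ Z, ∃ a, l = Lit.pos a

/-!
Two programs with the same SE-models (pairs `X ⊆ Y` with `Y ⊨ P` and `X ⊨ Pʸ`) are strongly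
equivalent, so some SE-model `(X, Y)` belongs to `P` but not to `Q`. If `Y ⊭ Q`, the facts `l ←`
for `l ∈ Y` make `Y` an answer set of `P ∪ R` but not of `Q ∪ R`. Otherwise `X ⊭ Qʸ`, and we take
for `R` the facts `l ←` for `l ∈ X` and the rules `l ← l'` for `l, l' ∈ Y \ X`: the only subsets
of `Y` satisfying `R` are `X` and `Y` itself, so `Y` is an answer set of `Q ∪ R` but not of
`P ∪ R`.
-/

def Rule.IsUnary (r : Rule) : Prop :=
  (∃ l : Lit, r.head = Fml.lit l) ∧ ((∃ l : Lit, r.body = Fml.lit l) ∨ r.body = Fml.top)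

def facts (X : Set Lit) : Prog :=
  (fun l => ⟨Fml.lit l, Fml.top⟩) '' X

def implications (S : Set Lit) : Prog :=
  (fun p : Lit × Lit => ⟨Fml.lit p.1, Fml.lit p.2⟩) '' (S ×ˢ S)

section Reduct

variable (X Y : Set Lit)

theorem sat_reduct_self (F : Fml) : Sat X (Reduct X F) ↔ Sat X F := by
  induction F with
  | not F ih =>
    simp only [Reduct]
    split_ifs with h <;> simp [Sat, h]
  | _ => simp_all [Reduct, Sat]

theorem satProg_reductProg_self (P : Prog) : SatProg Y (ReductProg Y P) ↔ SatProg Y P := by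
  simp only [SatProg, ReductProg, Set.forall_mem_image, SatRule, ReductRule,
    sat_reduct_self]

theorem satProg_union (A B : Prog) : SatProg X (A ∪ B) ↔ SatProg X A ∧ SatProg X B :=
  forall₂_or_left

theorem reductProg_union (A B : Prog) :
    ReductProg Y (A ∪ B) = ReductProg Y A ∪ ReductProg Y B :=
  Set.image_union _ _ _

theorem satProg_reductProg_union (A B : Prog) :
    SatProg X (ReductProg Y (A ∪ B)) ↔
      SatProg X (ReductProg Y A) ∧ SatProg X (ReductProg Y B) := by
  rw [reductProg_union, satProg_union]

theorem Rule.IsUnary.reductRule_eq {r : Rule} (hr : r.IsUnary) : ReductRule Y r = r := by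
  obtain ⟨⟨l, hl⟩, ⟨l', hl'⟩ | hl'⟩ := hr <;>
  · cases r
    subst hl hl'
    rfl

theorem reductProg_eq_self {R : Prog} (hR : ∀ r ∈ R, r.IsUnary) : ReductProg Y R = R := by
  conv_rhs => rw [← Set.image_id R]
  exact Set.image_congr fun r hr => (hR r hr).reductRule_eq Y

end Reduct

theorem AnswerSet.satProg {Y : Set Lit} {P : Prog} (h : AnswerSet Y P) : SatProg Y P :=
  (satProg_reductProg_self Y P).mp h.2.1

theorem AnswerSet.union_of_seModel_iff {P Q R : Prog} {Y : Set Lit}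
    (hse : ∀ X Y, SEModel P X Y ↔ SEModel Q X Y) (hY : AnswerSet Y (P ∪ R)) :
    AnswerSet Y (Q ∪ R) := by
  obtain ⟨hYc, hYred, hmin⟩ := hY
  obtain ⟨hYP, hYR⟩ := (satProg_reductProg_union Y Y P R).mp hYred
  have hQY : SEModel Q Y Y :=
    (hse Y Y).mp ⟨hYc, hYc, subset_rfl, (satProg_reductProg_self Y P).mp hYP, hYP⟩
  refine ⟨hYc, (satProg_reductProg_union Y Y Q R).mpr ⟨hQY.2.2.2.2, hYR⟩, ?_⟩
  intro Z hZc hZred hZY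
  obtain ⟨hZQ, hZR⟩ := (satProg_reductProg_union Z Y Q R).mp hZred
  have hPZY : SEModel P Z Y := (hse Z Y).mpr ⟨hZc, hYc, hZY, hQY.2.2.2.1, hZQ⟩
  exact hmin Z hZc ((satProg_reductProg_union Z Y P R).mpr ⟨hPZY.2.2.2.2, hZR⟩) hZY

theorem strongEq_of_seModel_iff {P Q : Prog} (hse : ∀ X Y, SEModel P X Y ↔ SEModel Q X Y) :
    StrongEq P Q := fun _ _ =>
  ⟨AnswerSet.union_of_seModel_iff hse,
    AnswerSet.union_of_seModel_iff fun X Y => (hse X Y).symm⟩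

theorem facts_isUnary (X : Set Lit) : ∀ r ∈ facts X, r.IsUnary := by
  rintro _ ⟨l, -, rfl⟩
  exact ⟨⟨l, rfl⟩, Or.inr rfl⟩

theorem implications_isUnary (S : Set Lit) : ∀ r ∈ implications S, r.IsUnary := by
  rintro _ ⟨⟨l, l'⟩, -, rfl⟩
  exact ⟨⟨l, rfl⟩, Or.inl ⟨l', rfl⟩⟩

theorem facts_union_implications_isUnary (X S : Set Lit) :
    ∀ r ∈ facts X ∪ implications S, r.IsUnary :=
  forall₂_or_left.mpr ⟨facts_isUnary X, implications_isUnary S⟩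

theorem satProg_facts {X Z : Set Lit} : SatProg Z (facts X) ↔ X ⊆ Z := by
  simp only [SatProg, facts, Set.forall_mem_image, SatRule, Sat, true_implies]
  rfl

theorem satProg_implications {S Z : Set Lit} :
    SatProg Z (implications S) ↔ ∀ l l', l ∈ S → l' ∈ S → l' ∈ Z → l ∈ Z := by
  simp only [SatProg, implications, Set.forall_mem_image, Set.mem_prod, SatRule, Sat,
    Prod.forall, and_imp]

theorem answerSet_union_facts_self {P : Prog} {Y : Set Lit} (hYc : Consistent Y)
    (hYP : SatProg Y P) : AnswerSet Y (P ∪ facts Y) := by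
  have hred := reductProg_eq_self Y (facts_isUnary Y)
  refine ⟨hYc, ?_, fun Z _ hZred hZY => hZY.antisymm ?_⟩
  · rw [satProg_reductProg_union, hred, satProg_reductProg_self, satProg_facts]
    exact ⟨hYP, subset_rfl⟩
  · rw [satProg_reductProg_union, hred, satProg_facts] at hZred
    exact hZred.2

theorem answerSet_union_facts_union_implications {Q : Prog} {X Y : Set Lit}
    (hYc : Consistent Y) (hYQ : SatProg Y Q) (hXY : X ⊆ Y)
    (hXQ : ¬ SatProg X (ReductProg Y Q)) :
    AnswerSet Y (Q ∪ (facts X ∪ implications (Y \ X))) := by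
  have hred : ∀ W, ReductProg W (facts X ∪ implications (Y \ X)) = _ := fun W =>
    reductProg_eq_self W (facts_union_implications_isUnary X _)
  refine ⟨hYc, ?_, ?_⟩
  · rw [satProg_reductProg_union, satProg_reductProg_self, hred, satProg_union, satProg_facts,
      satProg_implications]
    exact ⟨hYQ, hXY, fun _ _ hl _ _ => hl.1⟩
  intro Z _ hZred hZY
  obtain ⟨hZQ, hZR⟩ := (satProg_reductProg_union Z Y Q _).mp hZred
  rw [hred, satProg_union, satProg_facts, satProg_implications] at hZR
  obtain ⟨hXZ, hZclosed⟩ := hZR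
  obtain ⟨l', hl'Z, hl'YX⟩ : ∃ l' ∈ Z, l' ∈ Y \ X := by
    by_contra! hZX
    exact hXQ (hXZ.antisymm (fun l hl => by_contra fun hlX => hZX l hl ⟨hZY hl, hlX⟩) ▸ hZQ)
  refine hZY.antisymm fun l hl => ?_
  by_cases hlX : l ∈ X
  · exact hXZ hlX
  · exact hZclosed l l' ⟨hl, hlX⟩ hl'YX hl'Z

theorem not_answerSet_union_facts_union_implications {P : Prog} {X Y : Set Lit}
    (hXc : Consistent X) (hXY : X ⊂ Y) (hXP : SatProg X (ReductProg Y P)) :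
    ¬ AnswerSet Y (P ∪ (facts X ∪ implications (Y \ X))) := by
  rintro ⟨-, -, hmin⟩
  refine hXY.ne (hmin X hXc ?_ hXY.subset)
  rw [satProg_reductProg_union, reductProg_eq_self Y (facts_union_implications_isUnary X _),
    satProg_union, satProg_facts, satProg_implications]
  exact ⟨hXP, subset_rfl, fun _ _ _ hl' hl'X => absurd hl'X hl'.2⟩

theorem exists_unary_of_seModel_not_seModel {P Q : Prog} {X Y : Set Lit}
    (hP : SEModel P X Y) (hQ : ¬ SEModel Q X Y) :
    ∃ R : Prog, (∀ r ∈ R, r.IsUnary) ∧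
      ∃ Y : Set Lit, ¬ (AnswerSet Y (P ∪ R) ↔ AnswerSet Y (Q ∪ R)) := by
  obtain ⟨hXc, hYc, hXY, hYP, hXP⟩ := hP
  by_cases hYQ : SatProg Y Q
  · have hXQ : ¬ SatProg X (ReductProg Y Q) := fun h => hQ ⟨hXc, hYc, hXY, hYQ, h⟩
    have hXneY : X ≠ Y := by
      rintro rfl
      exact hXQ ((satProg_reductProg_self X Q).mpr hYQ)
    refine ⟨facts X ∪ implications (Y \ X), facts_union_implications_isUnary X _, Y,
      fun hiff => ?_⟩
    exact not_answerSet_union_facts_union_implications hXc (hXY.ssubset_of_ne hXneY) hXP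
      (hiff.mpr (answerSet_union_facts_union_implications hYc hYQ hXY hXQ))
  · exact ⟨facts Y, facts_isUnary Y, Y, fun hiff =>
      hYQ ((satProg_union Y Q _).mp (hiff.mp (answerSet_union_facts_self hYc hYP)).satProg).1⟩

/-- If P and Q are not strongly equivalent, they can be distinguished by
adding rules whose head is a literal and whose body is a literal or ⊤. -/
theorem stmt5 (P Q : Prog) (h : ¬ StrongEq P Q) :
    ∃ R : Prog,
      (∀ r ∈ R, (∃ l : Lit, r.head = Fml.lit l) ∧
        ((∃ l : Lit, r.body = Fml.lit l) ∨ r.body = Fml.top)) ∧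
      ∃ Y : Set Lit, ¬ (AnswerSet Y (P ∪ R) ↔ AnswerSet Y (Q ∪ R)) := by
  obtain ⟨X, Y, hdiff⟩ : ∃ X Y, ¬ (SEModel P X Y ↔ SEModel Q X Y) := by
    by_contra! hse
    exact h (strongEq_of_seModel_iff hse)
  by_cases hP : SEModel P X Y
  · exact exists_unary_of_seModel_not_seModel hP (fun hQ => hdiff (iff_of_true hP hQ))
  · obtain ⟨R, hR, Y', hY'⟩ :=
      exists_unary_of_seModel_not_seModel ((not_iff.mp hdiff).mp hP) hP
    exact ⟨R, hR, Y', fun hiff => hY' hiff.symm⟩
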